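/- arXiv:gr-qc/0301073 — 2 statements merged into one kernel-verified Lean document; each statement's English description precedes it below -/
import Mathlib

section
/- Let Ω ⊆ ℝⁿ be open, let u : ℝⁿ → ℝ be a C¹ function whose (compact) support is contained in Ω, and let v, w be C² real-valued functions on Ω. Then ∫_Ω e^{2v}|∇u|² dx ≥ ∫_Ω e^{2v}(Δv + Δw + |∇v|² − |∇w|²) u² dx. -/
open MeasureTheory Real

/-- The `i`-th partial derivative of a function on `ℝⁿ`. -/
noncomputable def pd (n : ℕ) (f : EuclideanSpace ℝ (Fin n) → ℝ)
    (i : Fin n) (x : EuclideanSpace ℝ (Fin n)) : ℝ :=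
  fderiv ℝ f x (EuclideanSpace.single i 1)

/-- The squared Euclidean norm of the gradient, `|∇f|² = Σᵢ (∂ᵢf)²`. -/
noncomputable def gradSq (n : ℕ) (f : EuclideanSpace ℝ (Fin n) → ℝ)
    (x : EuclideanSpace ℝ (Fin n)) : ℝ :=
  ∑ i, (pd n f i x) ^ 2

/-- The Euclidean Laplacian, `Δf = Σᵢ ∂ᵢ²f`. -/
noncomputable def lap (n : ℕ) (f : EuclideanSpace ℝ (Fin n) → ℝ)
    (x : EuclideanSpace ℝ (Fin n)) : ℝ :=
  ∑ i, pd n (pd n f i) i x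


open Filter Topology Set

/-!
With `ψ = v + w`, expand `0 ≤ ∫ e^{2v} |∇u + u ∇ψ|²`. The cross terms combine into
`∫ ∇(e^{2v} u²) · ∇ψ`, which integration by parts turns into `-∫ e^{2v} u² Δψ`, and
`|∇ψ|² - 2 ∇v · ∇ψ = |∇w|² - |∇v|²`; what is left is the inequality.
Since `v` and `w` are only `C²` on `Ω`, they are first replaced by `C²` functions on all of `ℝⁿ`
agreeing with them near `tsupport u`, obtained with a smooth cutoff.
-/

theorem ContDiffOn.exists_contDiff_eventuallyEq {E F : Type*} [NormedAddCommGroup E]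
    [NormedSpace ℝ E] [FiniteDimensional ℝ E] [NormedAddCommGroup F] [NormedSpace ℝ F]
    {k : ℕ∞} {Ω K : Set E} {f : E → F} (hf : ContDiffOn ℝ k f Ω) (hΩ : IsOpen Ω)
    (hK : IsClosed K) (hKΩ : K ⊆ Ω) :
    ∃ g : E → F, ContDiff ℝ k g ∧ ∀ x ∈ K, g =ᶠ[𝓝 x] f := by
  obtain ⟨χ, hχ0, hχ1, -⟩ := exists_contMDiffMap_zero_one_nhds_of_isClosed (n := k)
    (modelWithCornersSelf ℝ E) hΩ.isClosed_compl hK (disjoint_compl_left_iff_subset.2 hKΩ)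
  have hχ : ContDiff ℝ k χ := contMDiff_iff_contDiff.1 χ.contMDiff
  refine ⟨fun x => χ x • f x, contDiff_iff_contDiffAt.2 fun x => ?_, fun x hx => ?_⟩
  · by_cases hx : x ∈ Ω
    · exact (hχ.contDiffOn.smul hf).contDiffAt (hΩ.mem_nhds hx)
    · refine (contDiffAt_const (c := (0 : F))).congr_of_eventuallyEq ?_
      filter_upwards [hχ0.filter_mono (nhds_le_nhdsSet hx)] with y hy
      simp [hy]
  · filter_upwards [hχ1.filter_mono (nhds_le_nhdsSet hx)] with y hy
    simp [hy]

theorem Continuous.integrable_of_forall_notMem_tsupport {X F G : Type*} [TopologicalSpace X]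
    [MeasurableSpace X] [OpensMeasurableSpace X] {μ : Measure X} [IsFiniteMeasureOnCompacts μ]
    [NormedAddCommGroup F] [Zero G] {f : X → F} {g : X → G} (hf : Continuous f)
    (hg : HasCompactSupport g) (hfg : ∀ x ∉ tsupport g, f x = 0) : Integrable f μ :=
  hf.integrable_of_hasCompactSupport <| hg.mono' fun x hx => by_contra fun h => hx (hfg x h)

section

variable {n : ℕ} {f g : EuclideanSpace ℝ (Fin n) → ℝ} {x : EuclideanSpace ℝ (Fin n)}

theorem Filter.EventuallyEq.pd (h : f =ᶠ[𝓝 x] g) (i : Fin n) : pd n f i =ᶠ[𝓝 x] pd n g i :=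
  (h.fderiv (𝕜 := ℝ)).mono fun y hy => by simp only [_root_.pd, hy]

theorem Filter.EventuallyEq.gradSq_eq (h : f =ᶠ[𝓝 x] g) : gradSq n f x = gradSq n g x := by
  simp only [gradSq, (h.pd _).eq_of_nhds]

theorem Filter.EventuallyEq.lap_eq (h : f =ᶠ[𝓝 x] g) : lap n f x = lap n g x := by
  simp only [lap, ((h.pd _).pd _).eq_of_nhds]

theorem pd_eq_zero_of_notMem_tsupport (h : x ∉ tsupport f) (i : Fin n) : pd n f i x = 0 := by
  simp [pd, fderiv_of_notMem_tsupport ℝ h]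

theorem ContDiff.contDiff_pd {k m : WithTop ℕ∞} (hf : ContDiff ℝ k f) (hk : m + 1 ≤ k)
    (i : Fin n) : ContDiff ℝ m (pd n f i) :=
  (hf.fderiv_right hk).clm_apply contDiff_const

theorem ContDiff.continuous_pd (hf : ContDiff ℝ 1 f) (i : Fin n) : Continuous (pd n f i) :=
  (hf.contDiff_pd (m := 0) (by norm_num) i).continuous

theorem ContDiff.continuous_gradSq (hf : ContDiff ℝ 1 f) : Continuous (gradSq n f) :=
  continuous_finsetSum _ fun i _ => (hf.continuous_pd i).pow 2

theorem ContDiff.continuous_lap (hf : ContDiff ℝ 2 f) : Continuous (lap n f) :=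
  continuous_finsetSum _ fun i _ => (hf.contDiff_pd (m := 1) (by norm_num) i).continuous_pd i

theorem pd_add (hf : DifferentiableAt ℝ f x) (hg : DifferentiableAt ℝ g x) (i : Fin n) :
    pd n (fun y => f y + g y) i x = pd n f i x + pd n g i x := by
  simp [pd, fderiv_fun_add hf hg]

theorem lap_add (hf : ContDiff ℝ 2 f) (hg : ContDiff ℝ 2 g) (x : EuclideanSpace ℝ (Fin n)) :
    lap n (fun y => f y + g y) x = lap n f x + lap n g x := by
  have hpd : ∀ i, pd n (fun y => f y + g y) i = fun y => pd n f i y + pd n g i y := fun i =>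
    funext fun y => pd_add (hf.differentiable two_ne_zero y) (hg.differentiable two_ne_zero y) i
  simp only [lap, hpd, ← Finset.sum_add_distrib]
  refine Finset.sum_congr rfl fun i _ => pd_add ?_ ?_ i
  · exact (hf.contDiff_pd (m := 1) (by norm_num) i).differentiable one_ne_zero x
  · exact (hg.contDiff_pd (m := 1) (by norm_num) i).differentiable one_ne_zero x

theorem pd_exp_two_mul_mul_sq {V u : EuclideanSpace ℝ (Fin n) → ℝ}
    (hV : DifferentiableAt ℝ V x) (hu : DifferentiableAt ℝ u x) (i : Fin n) :
    pd n (fun y => exp (2 * V y) * u y ^ 2) i x =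
      exp (2 * V x) * (2 * pd n V i x * u x ^ 2 + 2 * u x * pd n u i x) := by
  have h : HasFDerivAt (fun y => exp (2 * V y) * u y ^ 2) _ x :=
    ((hV.hasFDerivAt.const_mul 2).exp).mul (hu.hasFDerivAt.pow 2)
  simp only [pd, h.fderiv, Nat.add_one_sub_one, pow_one, nsmul_eq_mul, Nat.cast_ofNat, add_apply,
    smul_apply, smul_eq_mul]
  ring

theorem integral_mul_pd_eq_neg_integral_pd_mul (hf : ContDiff ℝ 1 f) (hfc : HasCompactSupport f)
    (hg : ContDiff ℝ 1 g) (i : Fin n) :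
    ∫ x, f x * pd n g i x = -∫ x, pd n f i x * g x := by
  have hpdf : HasCompactSupport (pd n f i) := hfc.fderiv_apply (𝕜 := ℝ) _
  refine integral_mul_fderiv_eq_neg_fderiv_mul_of_integrable ?_ ?_ ?_
    (fun x _ => hf.differentiable one_ne_zero x) (fun x _ => hg.differentiable one_ne_zero x)
  · exact ((hf.continuous_pd i).mul hg.continuous).integrable_of_hasCompactSupport hpdf.mul_right
  · exact (hf.continuous.mul (hg.continuous_pd i)).integrable_of_hasCompactSupport hfc.mul_right
  · exact (hf.continuous.mul hg.continuous).integrable_of_hasCompactSupport hfc.mul_right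

theorem integral_mul_lap_eq_neg_integral_sum_pd_mul_pd (hf : ContDiff ℝ 1 f)
    (hfc : HasCompactSupport f) (hg : ContDiff ℝ 2 g) :
    ∫ x, f x * lap n g x = -∫ x, ∑ i, pd n f i x * pd n g i x := by
  have hg' : ∀ i, ContDiff ℝ 1 (pd n g i) := fun i => hg.contDiff_pd (by norm_num) i
  simp only [lap, Finset.mul_sum]
  rw [integral_finsetSum, integral_finsetSum, ← Finset.sum_neg_distrib]
  · exact Finset.sum_congr rfl fun i _ => integral_mul_pd_eq_neg_integral_pd_mul hf hfc (hg' i) i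
  · exact fun i _ => ((hf.continuous_pd i).mul (hg' i).continuous).integrable_of_hasCompactSupport
      (hfc.fderiv_apply (𝕜 := ℝ) _).mul_right
  · exact fun i _ => (hf.continuous.mul ((hg' i).continuous_pd i)).integrable_of_hasCompactSupport
      hfc.mul_right

theorem exp_mul_sum_pd_add_mul_pd_sq_eq {V W u : EuclideanSpace ℝ (Fin n) → ℝ}
    (hV : DifferentiableAt ℝ V x) (hW : DifferentiableAt ℝ W x) (hu : DifferentiableAt ℝ u x) :
    exp (2 * V x) * ∑ i, (pd n u i x + u x * pd n (fun y => V y + W y) i x) ^ 2 =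
      exp (2 * V x) * gradSq n u x +
        ∑ i, pd n (fun y => exp (2 * V y) * u y ^ 2) i x * pd n (fun y => V y + W y) i x +
        exp (2 * V x) * (gradSq n W x - gradSq n V x) * u x ^ 2 := by
  simp only [gradSq, pd_add hV hW, pd_exp_two_mul_mul_sq hV hu, Finset.mul_sum, Finset.sum_mul,
    ← Finset.sum_sub_distrib, ← Finset.sum_add_distrib]
  exact Finset.sum_congr rfl fun i _ => by ring

theorem weighted_poincare_exp_of_contDiff {u V W : EuclideanSpace ℝ (Fin n) → ℝ}
    (hu : ContDiff ℝ 1 u) (huc : HasCompactSupport u) (hV : ContDiff ℝ 2 V)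
    (hW : ContDiff ℝ 2 W) :
    ∫ x, exp (2 * V x) * (lap n V x + lap n W x + gradSq n V x - gradSq n W x) * u x ^ 2 ≤
      ∫ x, exp (2 * V x) * gradSq n u x := by
  set ψ := fun y => V y + W y
  set F := fun y => exp (2 * V y) * u y ^ 2
  have hψ : ContDiff ℝ 2 ψ := hV.add hW
  have hexp : Continuous fun x => exp (2 * V x) := by fun_prop
  have hu0 : ∀ x ∉ tsupport u, u x = 0 := fun x hx => image_eq_zero_of_notMem_tsupport hx
  have hF : ContDiff ℝ 1 F :=
    ((contDiff_const.mul (hV.of_le one_le_two)).exp).mul (hu.pow 2)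
  have hFc : HasCompactSupport F :=
    huc.mono' fun x hx => by_contra fun h => hx (by simp [F, hu0 x h])
  have hP : Integrable fun x => exp (2 * V x) * gradSq n u x :=
    (hexp.mul hu.continuous_gradSq).integrable_of_forall_notMem_tsupport huc fun x hx => by
      simp [gradSq, pd_eq_zero_of_notMem_tsupport hx]
  have hQ : Integrable fun x =>
      exp (2 * V x) * (lap n V x + lap n W x + gradSq n V x - gradSq n W x) * u x ^ 2 := by
    refine Continuous.integrable_of_forall_notMem_tsupport ?_ huc fun x hx => by simp [hu0 x hx]
    have := hV.continuous_lap
    have := hW.continuous_lap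
    have := (hV.of_le one_le_two).continuous_gradSq
    have := (hW.of_le one_le_two).continuous_gradSq
    fun_prop
  have hFL : Integrable fun x => F x * lap n ψ x :=
    (hF.continuous.mul hψ.continuous_lap).integrable_of_hasCompactSupport hFc.mul_right
  have hG : Integrable fun x => ∑ i, pd n F i x * pd n ψ i x :=
    integrable_finsetSum _ fun i _ => Continuous.integrable_of_hasCompactSupport
      ((hF.continuous_pd i).mul ((hψ.of_le one_le_two).continuous_pd i))
      (hFc.fderiv_apply (𝕜 := ℝ) _).mul_right
  calc ∫ x, exp (2 * V x) * (lap n V x + lap n W x + gradSq n V x - gradSq n W x) * u x ^ 2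
      = ∫ x, (exp (2 * V x) * (lap n V x + lap n W x + gradSq n V x - gradSq n W x) * u x ^ 2 -
          (F x * lap n ψ x + ∑ i, pd n F i x * pd n ψ i x)) := by
        rw [integral_sub hQ (hFL.fun_add hG), integral_add hFL hG,
          integral_mul_lap_eq_neg_integral_sum_pd_mul_pd hF hFc hψ, neg_add_cancel, sub_zero]
    _ ≤ ∫ x, exp (2 * V x) * gradSq n u x := by
        refine integral_mono (hQ.sub (hFL.fun_add hG)) hP fun x => ?_
        have hsq : exp (2 * V x) * ∑ i, (pd n u i x + u x * pd n ψ i x) ^ 2 = _ :=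
          exp_mul_sum_pd_add_mul_pd_sq_eq (hV.differentiable two_ne_zero x)
            (hW.differentiable two_ne_zero x) (hu.differentiable one_ne_zero x)
        have hlap : lap n ψ x = lap n V x + lap n W x := lap_add hV hW x
        have hnonneg : 0 ≤ exp (2 * V x) * ∑ i, (pd n u i x + u x * pd n ψ i x) ^ 2 := by
          positivity
        simp only [F, hlap]
        linarith

end

/-- Flat-case exponentially weighted Poincaré inequality: for `u` of class `C¹`
with compact support in the open set `Ω` and `v, w` of class `C²` on `Ω`,
`∫_Ω e^{2v}|∇u|² ≥ ∫_Ω e^{2v}(Δv + Δw + |∇v|² − |∇w|²) u²`. -/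
theorem weighted_poincare_exp (n : ℕ) (Ω : Set (EuclideanSpace ℝ (Fin n)))
    (hΩ : IsOpen Ω) (u v w : EuclideanSpace ℝ (Fin n) → ℝ)
    (hu : ContDiff ℝ 1 u) (husupp : HasCompactSupport u) (huΩ : tsupport u ⊆ Ω)
    (hv : ContDiffOn ℝ 2 v Ω) (hw : ContDiffOn ℝ 2 w Ω) :
    ∫ x in Ω, Real.exp (2 * v x) * gradSq n u x ≥
      ∫ x in Ω, Real.exp (2 * v x) *
        (lap n v x + lap n w x + gradSq n v x - gradSq n w x) * (u x) ^ 2 := by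
  obtain ⟨V, hV, hVv⟩ := hv.exists_contDiff_eventuallyEq (k := 2) hΩ (isClosed_tsupport u) huΩ
  obtain ⟨W, hW, hWw⟩ := hw.exists_contDiff_eventuallyEq (k := 2) hΩ (isClosed_tsupport u) huΩ
  have hlhs : ∀ x, exp (2 * v x) * gradSq n u x = exp (2 * V x) * gradSq n u x := by
    intro x
    by_cases hx : x ∈ tsupport u
    · rw [(hVv x hx).eq_of_nhds]
    · simp [gradSq, pd_eq_zero_of_notMem_tsupport hx]
  have hrhs : ∀ x, exp (2 * v x) * (lap n v x + lap n w x + gradSq n v x - gradSq n w x) * u x ^ 2 =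
      exp (2 * V x) * (lap n V x + lap n W x + gradSq n V x - gradSq n W x) * u x ^ 2 := by
    intro x
    by_cases hx : x ∈ tsupport u
    · rw [(hVv x hx).eq_of_nhds, (hVv x hx).lap_eq, (hVv x hx).gradSq_eq, (hWw x hx).lap_eq,
        (hWw x hx).gradSq_eq]
    · simp [image_eq_zero_of_notMem_tsupport hx]
  have hoff : ∀ x ∉ Ω, x ∉ tsupport u := fun x hx h => hx (huΩ h)
  simp_rw [hlhs, hrhs]
  rw [setIntegral_eq_integral_of_forall_compl_eq_zero fun x hx => by
      simp [gradSq, pd_eq_zero_of_notMem_tsupport (hoff x hx)],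
    setIntegral_eq_integral_of_forall_compl_eq_zero fun x hx => by
      simp [image_eq_zero_of_notMem_tsupport (hoff x hx)]]
  exact weighted_poincare_exp_of_contDiff hu husupp hV hW
end

section
/- Let n ≥ 1, let u be a C¹ real-valued function on ℝⁿ, let V be a C¹ vector field on ℝⁿ, and let Y be a C¹ vector field on ℝⁿ with compact support. Then ∫ e^{2u} Σᵢ,ⱼ (S(Y)ᵢⱼ + (1/2)(div Y)δᵢⱼ) Yᵢ Vⱼ dx = −(1/2) ∫ e^{2u} ( Σᵢ,ⱼ Yᵢ Yⱼ ∂ᵢVⱼ + (1/2)(div V)|Y|² + ⟨∇u, V⟩|Y|² + 2⟨∇u, Y⟩⟨V, Y⟩ ) dx. -/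
/-!
Twice the integrand on the left plus the integrand on the right is the divergence of the
compactly supported `C¹` field `W = e^{2u} (⟨V, Y⟩ Y + ½ |Y|² V)`: the product rule turns the
derivative of the weight into the `∇u` terms and the derivatives of `⟨V, Y⟩` and `|Y|²` into the
symmetrized gradient of `Y` and `∂ᵢVⱼ`. The integral of a divergence vanishes, which is integration
by parts against the constant function `1`.
-/

open MeasureTheory Real

/-- The partial derivative `∂ᵢYⱼ` of a vector field `Y` on `ℝⁿ`. -/
noncomputable def vpd (n : ℕ)
    (Y : EuclideanSpace ℝ (Fin n) → EuclideanSpace ℝ (Fin n))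
    (i j : Fin n) (x : EuclideanSpace ℝ (Fin n)) : ℝ :=
  fderiv ℝ (fun y => Y y j) x (EuclideanSpace.single i 1)

/-- The symmetrized gradient `S(Y)ᵢⱼ = (∂ᵢYⱼ + ∂ⱼYᵢ)/2` of a vector field. -/
noncomputable def symGrad (n : ℕ)
    (Y : EuclideanSpace ℝ (Fin n) → EuclideanSpace ℝ (Fin n))
    (i j : Fin n) (x : EuclideanSpace ℝ (Fin n)) : ℝ :=
  (vpd n Y i j x + vpd n Y j i x) / 2

/-- The divergence `div Y = Σᵢ ∂ᵢYᵢ` of a vector field on `ℝⁿ`. -/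
noncomputable def diverg (n : ℕ)
    (Y : EuclideanSpace ℝ (Fin n) → EuclideanSpace ℝ (Fin n))
    (x : EuclideanSpace ℝ (Fin n)) : ℝ :=
  ∑ i, vpd n Y i i x

section IntegrationByParts

variable {E G : Type*} [NormedAddCommGroup E] [NormedSpace ℝ E] [MeasurableSpace E] [BorelSpace E]
  {μ : Measure E} [NormedAddCommGroup G] [NormedSpace ℝ G]

theorem ContDiff.integrable_fderiv_apply [IsFiniteMeasureOnCompacts μ] {f : E → G}
    (hf : ContDiff ℝ 1 f) (hc : HasCompactSupport f) (v : E) : Integrable (fderiv ℝ f · v) μ :=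
  ((hf.continuous_fderiv one_ne_zero).clm_apply continuous_const).integrable_of_hasCompactSupport
    (hc.fderiv_apply (𝕜 := ℝ) v)

theorem integral_fderiv_apply_eq_zero [FiniteDimensional ℝ E] [μ.IsAddHaarMeasure] {f : E → G}
    (hf : ContDiff ℝ 1 f) (hc : HasCompactSupport f) (v : E) : ∫ x, fderiv ℝ f x v ∂μ = 0 := by
  have := integral_smul_fderiv_eq_neg_fderiv_smul_of_integrable (μ := μ) (v := v)
    (f := fun _ => (1 : ℝ)) (g := f) (by simp)
    (by simpa using hf.integrable_fderiv_apply hc v)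
    (by simpa using hf.continuous.integrable_of_hasCompactSupport hc)
    (fun x _ => differentiableAt_const _) (fun x _ => hf.differentiable one_ne_zero x)
  simpa using this

end IntegrationByParts

section Euclidean

variable {n : ℕ} {x : EuclideanSpace ℝ (Fin n)}
  {W : EuclideanSpace ℝ (Fin n) → EuclideanSpace ℝ (Fin n)}

theorem pd_mul {f g : EuclideanSpace ℝ (Fin n) → ℝ} (hf : DifferentiableAt ℝ f x)
    (hg : DifferentiableAt ℝ g x) (i : Fin n) :
    pd n (fun y => f y * g y) i x = pd n f i x * g x + f x * pd n g i x := by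
  simp only [pd, fderiv_fun_mul hf hg, add_apply, smul_apply, smul_eq_mul]
  ring

theorem pd_exp {f : EuclideanSpace ℝ (Fin n) → ℝ} (hf : DifferentiableAt ℝ f x) (i : Fin n) :
    pd n (fun y => exp (f y)) i x = exp (f x) * pd n f i x := by
  simp only [pd, fderiv_exp hf, smul_apply, smul_eq_mul]

theorem pd_const_mul {f : EuclideanSpace ℝ (Fin n) → ℝ} (hf : DifferentiableAt ℝ f x) (c : ℝ)
    (i : Fin n) : pd n (fun y => c * f y) i x = c * pd n f i x := by
  simp only [pd, fderiv_const_mul hf c, smul_apply, smul_eq_mul]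

theorem pd_sum_mul {ι : Type*} (s : Finset ι) {f g : ι → EuclideanSpace ℝ (Fin n) → ℝ}
    (hf : ∀ k, DifferentiableAt ℝ (f k) x) (hg : ∀ k, DifferentiableAt ℝ (g k) x) (i : Fin n) :
    pd n (fun y => ∑ k ∈ s, f k y * g k y) i x
      = ∑ k ∈ s, (pd n (f k) i x * g k x + f k x * pd n (g k) i x) := by
  rw [pd, fderiv_fun_sum fun k _ => (hf k).fun_mul (hg k), sum_apply]
  exact Finset.sum_congr rfl fun k _ => pd_mul (hf k) (hg k) i

theorem diverg_add {Y Z : EuclideanSpace ℝ (Fin n) → EuclideanSpace ℝ (Fin n)}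
    (hY : DifferentiableAt ℝ Y x) (hZ : DifferentiableAt ℝ Z x) :
    diverg n (fun y => Y y + Z y) x = diverg n Y x + diverg n Z x := by
  simp only [diverg, ← Finset.sum_add_distrib]
  refine Finset.sum_congr rfl fun i _ => ?_
  simp only [vpd, PiLp.add_apply]
  rw [fderiv_fun_add (differentiableAt_euclidean.1 hY i) (differentiableAt_euclidean.1 hZ i)]
  rfl

theorem diverg_smul {f : EuclideanSpace ℝ (Fin n) → ℝ}
    {Z : EuclideanSpace ℝ (Fin n) → EuclideanSpace ℝ (Fin n)}
    (hf : DifferentiableAt ℝ f x) (hZ : DifferentiableAt ℝ Z x) :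
    diverg n (fun y => f y • Z y) x = f x * diverg n Z x + ∑ i, pd n f i x * Z x i := by
  simp only [diverg, Finset.mul_sum, ← Finset.sum_add_distrib]
  refine Finset.sum_congr rfl fun i _ => ?_
  change pd n (fun y => f y * Z y i) i x = _
  rw [pd_mul hf (differentiableAt_euclidean.1 hZ i)]
  simp only [vpd, pd]
  ring

theorem sum_symGrad_add_half_diverg_mul (Y : EuclideanSpace ℝ (Fin n) → EuclideanSpace ℝ (Fin n))
    (a b : Fin n → ℝ) :
    ∑ i, ∑ j, (symGrad n Y i j x + (1/2) * diverg n Y x * (if i = j then (1:ℝ) else 0))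
        * a i * b j
      = (1/2) * (∑ i, ∑ j, vpd n Y i j x * a i * b j + ∑ i, ∑ j, vpd n Y j i x * a i * b j
        + diverg n Y x * ∑ i, a i * b i) := by
  simp only [symGrad, add_mul, mul_ite, mul_one, mul_zero, ite_mul, zero_mul,
    Finset.sum_add_distrib, Finset.sum_ite_eq, Finset.mem_univ, if_true, Finset.mul_sum]
  simp only [mul_add, Finset.mul_sum, ← Finset.sum_add_distrib]
  refine Finset.sum_congr rfl fun i _ => ?_
  congr 1
  · exact Finset.sum_congr rfl fun j _ => by ring
  · ring

theorem HasCompactSupport.euclidean_apply (hc : HasCompactSupport W) (i : Fin n) :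
    HasCompactSupport fun x => W x i :=
  hc.comp_left (g := fun v : EuclideanSpace ℝ (Fin n) => v i) rfl

theorem continuous_vpd (hW : ContDiff ℝ 1 W) (i j : Fin n) : Continuous (vpd n W i j) :=
  ((contDiff_euclidean.1 hW j).continuous_fderiv one_ne_zero).clm_apply continuous_const

theorem integrable_diverg (hW : ContDiff ℝ 1 W) (hc : HasCompactSupport W) :
    Integrable (diverg n W) :=
  integrable_finsetSum _ fun i _ =>
    (contDiff_euclidean.1 hW i).integrable_fderiv_apply (hc.euclidean_apply i) _

theorem integral_diverg_eq_zero (hW : ContDiff ℝ 1 W) (hc : HasCompactSupport W) :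
    ∫ x, diverg n W x = 0 := by
  unfold diverg vpd
  rw [integral_finsetSum _ fun i _ =>
    (contDiff_euclidean.1 hW i).integrable_fderiv_apply (hc.euclidean_apply i) _]
  exact Finset.sum_eq_zero fun i _ =>
    integral_fderiv_apply_eq_zero (contDiff_euclidean.1 hW i) (hc.euclidean_apply i) _

end Euclidean

noncomputable def killingFlux (n : ℕ)
    (Y V : EuclideanSpace ℝ (Fin n) → EuclideanSpace ℝ (Fin n)) (x : EuclideanSpace ℝ (Fin n)) :
    EuclideanSpace ℝ (Fin n) :=
  (∑ k, V x k * Y x k) • Y x + ((1/2) * ∑ k, Y x k ^ 2) • V x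

section KillingFlux

variable {n : ℕ} {x : EuclideanSpace ℝ (Fin n)} {u : EuclideanSpace ℝ (Fin n) → ℝ}
  {Y V : EuclideanSpace ℝ (Fin n) → EuclideanSpace ℝ (Fin n)}

theorem contDiff_killingFlux (hY : ContDiff ℝ 1 Y) (hV : ContDiff ℝ 1 V) :
    ContDiff ℝ 1 (killingFlux n Y V) := by
  unfold killingFlux
  fun_prop

theorem differentiableAt_killingFlux (hY : DifferentiableAt ℝ Y x)
    (hV : DifferentiableAt ℝ V x) : DifferentiableAt ℝ (killingFlux n Y V) x := by
  unfold killingFlux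
  fun_prop

theorem hasCompactSupport_killingFlux (hY : HasCompactSupport Y) :
    HasCompactSupport (killingFlux n Y V) :=
  hY.mono <| Function.support_subset_iff'.2 fun x hx => by
    simp [killingFlux, Function.notMem_support.1 hx]

theorem sum_mul_killingFlux (g : Fin n → ℝ) :
    ∑ i, g i * killingFlux n Y V x i
      = (∑ i, V x i * Y x i) * (∑ i, g i * Y x i)
        + ((1/2) * ∑ i, Y x i ^ 2) * ∑ i, g i * V x i := by
  simp only [killingFlux, PiLp.add_apply, PiLp.smul_apply, smul_eq_mul, mul_add,
    Finset.sum_add_distrib, Finset.mul_sum]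
  congr 1 <;> exact Finset.sum_congr rfl fun i _ => by ring

theorem diverg_killingFlux (hY : DifferentiableAt ℝ Y x) (hV : DifferentiableAt ℝ V x) :
    diverg n (killingFlux n Y V) x
      = 2 * ∑ i, ∑ j, (symGrad n Y i j x +
            (1/2) * diverg n Y x * (if i = j then (1:ℝ) else 0)) * Y x i * V x j
        + ((∑ i, ∑ j, Y x i * Y x j * vpd n V i j x) + (1/2) * diverg n V x * ∑ i, Y x i ^ 2) := by
  have hYk := differentiableAt_euclidean.1 hY
  have hVk := differentiableAt_euclidean.1 hV
  have hVY (i : Fin n) : pd n (fun y => ∑ k, V y k * Y y k) i x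
      = ∑ k, (vpd n V i k x * Y x k + V x k * vpd n Y i k x) :=
    pd_sum_mul _ hVk hYk i
  have hYY (i : Fin n) : pd n (fun y => (1/2) * ∑ k, Y y k ^ 2) i x
      = ∑ k, Y x k * vpd n Y i k x := by
    simp only [sq]
    rw [pd_const_mul (by fun_prop), pd_sum_mul _ hYk hYk, Finset.mul_sum]
    exact Finset.sum_congr rfl fun k _ => by simp only [vpd, pd]; ring
  have hVYY : ∑ i, (∑ k, (vpd n V i k x * Y x k + V x k * vpd n Y i k x)) * Y x i
      = ∑ i, ∑ j, Y x i * Y x j * vpd n V i j x + ∑ i, ∑ j, vpd n Y i j x * Y x i * V x j := by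
    simp only [Finset.sum_mul, ← Finset.sum_add_distrib]
    exact Finset.sum_congr rfl fun i _ => Finset.sum_congr rfl fun j _ => by ring
  have hYYV : ∑ i, (∑ k, Y x k * vpd n Y i k x) * V x i
      = ∑ i, ∑ j, vpd n Y j i x * Y x i * V x j := by
    rw [Finset.sum_comm]
    simp only [Finset.sum_mul]
    exact Finset.sum_congr rfl fun i _ => Finset.sum_congr rfl fun j _ => by ring
  have hYV : ∑ i, Y x i * V x i = ∑ i, V x i * Y x i :=
    Finset.sum_congr rfl fun i _ => mul_comm _ _
  unfold killingFlux
  rw [diverg_add (by fun_prop) (by fun_prop), diverg_smul (by fun_prop) hY,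
    diverg_smul (by fun_prop) hV]
  simp only [hVY, hYY]
  rw [hVYY, hYYV, sum_symGrad_add_half_diverg_mul, hYV]
  ring

theorem diverg_exp_smul_killingFlux (hu : DifferentiableAt ℝ u x) (hY : DifferentiableAt ℝ Y x)
    (hV : DifferentiableAt ℝ V x) :
    diverg n (fun y => exp (2 * u y) • killingFlux n Y V y) x
      = 2 * (exp (2 * u x) * ∑ i, ∑ j, (symGrad n Y i j x +
            (1/2) * diverg n Y x * (if i = j then (1:ℝ) else 0)) * Y x i * V x j)
        + exp (2 * u x) * ((∑ i, ∑ j, Y x i * Y x j * vpd n V i j x) +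
            (1/2) * diverg n V x * (∑ i, (Y x i) ^ 2) +
            (∑ i, pd n u i x * V x i) * (∑ i, (Y x i) ^ 2) +
            2 * (∑ i, pd n u i x * Y x i) * (∑ i, V x i * Y x i)) := by
  have hexp (i : Fin n) :
      pd n (fun y => exp (2 * u y)) i x * killingFlux n Y V x i
        = 2 * exp (2 * u x) * (pd n u i x * killingFlux n Y V x i) := by
    rw [pd_exp (by fun_prop), pd_const_mul hu]
    ring
  rw [diverg_smul (by fun_prop) (differentiableAt_killingFlux hY hV), diverg_killingFlux hY hV,
    Finset.sum_congr rfl fun i _ => hexp i, ← Finset.mul_sum, sum_mul_killingFlux]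
  ring

end KillingFlux

theorem killing_operator_identity_weighted_general (n : ℕ)
    (u : EuclideanSpace ℝ (Fin n) → ℝ)
    (Y V : EuclideanSpace ℝ (Fin n) → EuclideanSpace ℝ (Fin n))
    (hu : ContDiff ℝ 1 u) (hY : ContDiff ℝ 1 Y) (hV : ContDiff ℝ 1 V)
    (hsupp : HasCompactSupport Y) :
    ∫ x : EuclideanSpace ℝ (Fin n),
        Real.exp (2 * u x) *
          ∑ i, ∑ j, (symGrad n Y i j x +
            (1/2) * diverg n Y x * (if i = j then (1:ℝ) else 0)) * Y x i * V x j
      = -(1/2) * ∫ x : EuclideanSpace ℝ (Fin n),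
          Real.exp (2 * u x) *
            ((∑ i, ∑ j, Y x i * Y x j * vpd n V i j x) +
              (1/2) * diverg n V x * (∑ i, (Y x i) ^ 2) +
              (∑ i, pd n u i x * V x i) * (∑ i, (Y x i) ^ 2) +
              2 * (∑ i, pd n u i x * Y x i) * (∑ i, V x i * Y x i)) := by
  set A : EuclideanSpace ℝ (Fin n) → ℝ := fun x => exp (2 * u x) *
    ∑ i, ∑ j, (symGrad n Y i j x +
      (1/2) * diverg n Y x * (if i = j then (1:ℝ) else 0)) * Y x i * V x j
  have hA : Integrable A := by
    refine Continuous.integrable_of_hasCompactSupport ?_ ?_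
    · have := continuous_vpd hY
      simp only [A, symGrad, diverg]
      fun_prop
    · exact hsupp.mono <| Function.support_subset_iff'.2 fun x hx => by
        simp [A, Function.notMem_support.1 hx]
  set W : EuclideanSpace ℝ (Fin n) → EuclideanSpace ℝ (Fin n) :=
    fun x => exp (2 * u x) • killingFlux n Y V x
  have hW : ContDiff ℝ 1 W := by
    exact (contDiff_const.mul hu).exp.smul (contDiff_killingFlux hY hV)
  have hWc : HasCompactSupport W :=
    HasCompactSupport.smul_left (f := fun x => exp (2 * u x)) (hasCompactSupport_killingFlux hsupp)
  calc ∫ x, A x = -(1/2) * ((∫ x, diverg n W x) - ∫ x, 2 * A x) := by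
        rw [integral_diverg_eq_zero hW hWc, integral_const_mul]; ring
    _ = -(1/2) * ∫ x, (diverg n W x - 2 * A x) := by
        rw [integral_sub (integrable_diverg hW hWc) (hA.const_mul 2)]
    _ = _ := by
        congr 1
        refine integral_congr_ae (Filter.Eventually.of_forall fun x => ?_)
        simp only [W, diverg_exp_smul_killingFlux (hu.differentiable one_ne_zero x)
          (hY.differentiable one_ne_zero x) (hV.differentiable one_ne_zero x)]
        ring

/-- Flat-case exponentially weighted integration-by-parts identity for the
Killing operator. -/
theorem killing_operator_identity_weighted (n : ℕ) (hn : 1 ≤ n)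
    (u : EuclideanSpace ℝ (Fin n) → ℝ)
    (Y V : EuclideanSpace ℝ (Fin n) → EuclideanSpace ℝ (Fin n))
    (hu : ContDiff ℝ 1 u) (hY : ContDiff ℝ 1 Y) (hV : ContDiff ℝ 1 V)
    (hsupp : HasCompactSupport Y) :
    ∫ x : EuclideanSpace ℝ (Fin n),
        Real.exp (2 * u x) *
          ∑ i, ∑ j, (symGrad n Y i j x +
            (1/2) * diverg n Y x * (if i = j then (1:ℝ) else 0)) * Y x i * V x j
      = -(1/2) * ∫ x : EuclideanSpace ℝ (Fin n),
          Real.exp (2 * u x) *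
            ((∑ i, ∑ j, Y x i * Y x j * vpd n V i j x) +
              (1/2) * diverg n V x * (∑ i, (Y x i) ^ 2) +
              (∑ i, pd n u i x * V x i) * (∑ i, (Y x i) ^ 2) +
              2 * (∑ i, pd n u i x * Y x i) * (∑ i, V x i * Y x i)) :=
  killing_operator_identity_weighted_general n u Y V hu hY hV hsupp
end
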